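/- The truncated function w_k is Monge: for any integers 0 ≤ i₁ < i₂ < i₃ < i₄ ≤ n, w_k(i₁, i₄) + w_k(i₂, i₃) ≥ w_k(i₁, i₃) + w_k(i₂, i₄). -/

import Mathlib

/-!
`w'(j, i) = (i - j) ∑_{j<m≤i} P_m² - (∑_{j<m≤i} P_m)²` is nonnegative by Cauchy–Schwarz, and for
`A ≤ B ≤ C ≤ D` its Monge defect `w'(A,D) + w'(B,C) - w'(A,C) - w'(B,D)` equals the sum of
`(P_m - P_m')²` over `A < m ≤ B < C < m' ≤ D`.

Outside the band the truncated cost depends only on the length `d`: it is `2^(n-d) M` below and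
`2^d M` above. Of the two crossing intervals, one below the band costs at most half the nested
interval `[i₂, i₃]`, one above at most half the enclosing `[i₁, i₄]`, and one inside at most `M`,
which is again at most half the nested pair's total unless all four intervals lie in the band;
there the Monge property of `w'` applies.
-/

open Finset

theorem sum_sum_sub_sq {ι R : Type*} [CommRing R] (s t : Finset ι) (f : ι → R) :
    ∑ x ∈ s, ∑ y ∈ t, (f x - f y) ^ 2
      = #t * ∑ x ∈ s, f x ^ 2 + #s * ∑ y ∈ t, f y ^ 2 - 2 * (∑ x ∈ s, f x) * ∑ y ∈ t, f y := by
  simp only [sub_sq, sum_add_distrib, sum_sub_distrib, sum_const, nsmul_eq_mul, mul_sum, sum_mul]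
  rw [sum_comm (s := s) (t := t)]
  simp only [← mul_sum, ← sum_mul]
  ring

namespace SquaredDeviation

variable (P : ℕ → ℝ)

/-- The paper's `w'(j, i)`. -/
def sqDev (j i : ℕ) : ℝ :=
  ((i : ℝ) - j) * ∑ m ∈ Ioc j i, P m ^ 2 - (∑ m ∈ Ioc j i, P m) ^ 2

theorem natCast_card_Ioc {j i : ℕ} (h : j ≤ i) : ((#(Ioc j i) : ℕ) : ℝ) = (i : ℝ) - j := by
  rw [Nat.card_Ioc, Nat.cast_sub h]

theorem sqDev_nonneg {j i : ℕ} (h : j ≤ i) : 0 ≤ sqDev P j i := by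
  have := sq_sum_le_card_mul_sum_sq (s := Ioc j i) (f := P)
  rw [natCast_card_Ioc h] at this
  unfold sqDev
  linarith

theorem sqDev_add_sqDev_le {A B C D : ℕ} (hAB : A ≤ B) (hBC : B ≤ C) (hCD : C ≤ D) :
    sqDev P A C + sqDev P B D ≤ sqDev P A D + sqDev P B C := by
  have defect := sum_sum_sub_sq (Ioc A B) (Ioc C D) P
  rw [natCast_card_Ioc hAB, natCast_card_Ioc hCD] at defect
  have defect_nonneg : 0 ≤ ∑ x ∈ Ioc A B, ∑ y ∈ Ioc C D, (P x - P y) ^ 2 := by positivity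
  unfold sqDev
  rw [← sum_Ioc_consecutive _ hAB (hBC.trans hCD), ← sum_Ioc_consecutive _ hBC hCD,
    ← sum_Ioc_consecutive _ hAB hBC, ← sum_Ioc_consecutive _ hAB (hBC.trans hCD),
    ← sum_Ioc_consecutive _ hBC hCD, ← sum_Ioc_consecutive _ hAB hBC]
  linear_combination defect_nonneg + defect

end SquaredDeviation

namespace TruncatedCost

/-- The paper's `w_k(j, i)` is `truncCost n c' ((1 + ε) * c') M (w'(j, i) / c') (i - j)`. -/
noncomputable def truncCost (n : ℕ) (lo hi M v : ℝ) (d : ℕ) : ℝ :=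
  if (d : ℝ) < lo then 2 ^ (n - d) * M else if hi < d then 2 ^ d * M else v

variable {n l a b L d : ℕ} {lo hi M v vl va vb vL : ℝ}

theorem truncCost_of_lt (h : (d : ℝ) < lo) : truncCost n lo hi M v d = 2 ^ (n - d) * M :=
  if_pos h

theorem truncCost_of_gt (hlo : lo ≤ d) (hhi : hi < d) : truncCost n lo hi M v d = 2 ^ d * M := by
  rw [truncCost, if_neg (not_lt.2 hlo), if_pos hhi]

theorem truncCost_of_mem_Icc (hlo : lo ≤ d) (hhi : d ≤ hi) : truncCost n lo hi M v d = v := by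
  rw [truncCost, if_neg (not_lt.2 hlo), if_neg (not_lt.2 hhi)]

theorem truncCost_nonneg (hM : 0 ≤ M) (hv : 0 ≤ v) : 0 ≤ truncCost n lo hi M v d := by
  unfold truncCost
  split_ifs <;> positivity

theorem two_mul_two_pow_mul_le {p q : ℕ} (h : p < q) (hM : 0 ≤ M) :
    2 * (2 ^ p * M) ≤ 2 ^ q * M := by
  rw [← mul_assoc, ← pow_succ']
  exact mul_le_mul_of_nonneg_right (pow_le_pow_right₀ one_le_two h) hM

theorem two_mul_truncCost_le (hla : l < a) (haL : a < L) (hLn : L ≤ n)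
    (hout : (l : ℝ) < lo ∨ hi < L) (hM : 0 ≤ M) (hva : va ≤ M) (hvl : 0 ≤ vl) (hvL : 0 ≤ vL) :
    2 * truncCost n lo hi M va a ≤ truncCost n lo hi M vL L + truncCost n lo hi M vl l := by
  have hla' : (l : ℝ) < a := by exact_mod_cast hla
  have haL' : (a : ℝ) < L := by exact_mod_cast haL
  have hl := truncCost_nonneg (n := n) (lo := lo) (hi := hi) (d := l) hM hvl
  have hL := truncCost_nonneg (n := n) (lo := lo) (hi := hi) (d := L) hM hvL
  by_cases ha_lo : (a : ℝ) < lo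
  · rw [truncCost_of_lt ha_lo, truncCost_of_lt (hla'.trans ha_lo)]
    linarith [two_mul_two_pow_mul_le (show n - a < n - l by omega) hM]
  by_cases ha_hi : hi < a
  · rw [truncCost_of_gt (not_lt.1 ha_lo) ha_hi,
      truncCost_of_gt (by linarith [not_lt.1 ha_lo]) (ha_hi.trans haL')]
    linarith [two_mul_two_pow_mul_le haL hM]
  rw [truncCost_of_mem_Icc (not_lt.1 ha_lo) (not_lt.1 ha_hi)]
  rcases hout with hl_lo | hL_hi
  · rw [truncCost_of_lt hl_lo]
    linarith [two_mul_two_pow_mul_le (show 0 < n - l by omega) hM]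
  · rw [truncCost_of_gt (by linarith [not_lt.1 ha_lo]) hL_hi]
    linarith [two_mul_two_pow_mul_le (show 0 < L by omega) hM]

theorem truncCost_cross_add_le (hla : l < a) (hlb : l < b) (haL : a < L)
    (hbL : b < L) (hLn : L ≤ n) (hM : 0 ≤ M) (hva : va ≤ M) (hvb : vb ≤ M) (hvl : 0 ≤ vl)
    (hvL : 0 ≤ vL) (hmonge : va + vb ≤ vL + vl) :
    truncCost n lo hi M va a + truncCost n lo hi M vb b
      ≤ truncCost n lo hi M vL L + truncCost n lo hi M vl l := by
  by_cases hout : (l : ℝ) < lo ∨ hi < L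
  · linarith [two_mul_truncCost_le hla haL hLn hout hM hva hvl hvL,
      two_mul_truncCost_le hlb hbL hLn hout hM hvb hvl hvL]
  obtain ⟨hl_lo, hL_hi⟩ : lo ≤ l ∧ L ≤ hi := by simpa only [not_or, not_lt] using hout
  have hla' : (l : ℝ) ≤ a := by exact_mod_cast hla.le
  have hlb' : (l : ℝ) ≤ b := by exact_mod_cast hlb.le
  have haL' : (a : ℝ) ≤ L := by exact_mod_cast haL.le
  have hbL' : (b : ℝ) ≤ L := by exact_mod_cast hbL.le
  rwa [truncCost_of_mem_Icc (hl_lo.trans hla') (haL'.trans hL_hi),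
    truncCost_of_mem_Icc (hl_lo.trans hlb') (hbL'.trans hL_hi),
    truncCost_of_mem_Icc (hl_lo.trans (hla'.trans haL')) hL_hi,
    truncCost_of_mem_Icc hl_lo ((hla'.trans haL').trans hL_hi)]

end TruncatedCost

open SquaredDeviation TruncatedCost

theorem stmt9_general (n : ℕ) (P : ℕ → ℝ)
    (S : ℕ → ℝ) (hS : ∀ i, S i = ∑ m ∈ Finset.Icc 1 i, P m)
    (w' : ℕ → ℕ → ℝ)
    (hw' : ∀ j i : ℕ, j < i → i ≤ n →
      w' j i = ((i : ℝ) - j) * ∑ m ∈ Finset.Icc (j + 1) i, (P m) ^ 2 - (S i - S j) ^ 2)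
    (ε : ℝ) (hε : 0 < ε) (k : ℕ)
    (c' : ℝ) (hc' : c' = (1 + ε) ^ (k - 1))
    (M : ℝ) (hMpos : 0 < M) (hM : ∀ j i : ℕ, j < i → i ≤ n → w' j i / c' ≤ M)
    (wk : ℕ → ℕ → ℝ)
    (hwk : ∀ j i : ℕ, j < i → i ≤ n →
      wk j i = if ((i : ℝ) - j) < c' then 2 ^ (n - i + j) * M
        else if (1 + ε) * c' < ((i : ℝ) - j) then 2 ^ (i - j) * M
        else w' j i / c')
    (i₁ i₂ i₃ i₄ : ℕ) (h12 : i₁ < i₂) (h23 : i₂ < i₃) (h34 : i₃ < i₄) (h4n : i₄ ≤ n) :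
    wk i₁ i₃ + wk i₂ i₄ ≤ wk i₁ i₄ + wk i₂ i₃ := by
  have hc : 0 < c' := hc' ▸ by positivity
  have hS_Ioc : ∀ i, S i = ∑ m ∈ Ioc 0 i, P m := fun i => by
    rw [hS, ← Icc_add_one_left_eq_Ioc, zero_add]
  have hw'_eq : ∀ j i, j < i → i ≤ n → w' j i = sqDev P j i := by
    intro j i hji hin
    rw [hw' j i hji hin, hS_Ioc, hS_Ioc, Icc_add_one_left_eq_Ioc,
      ← sum_Ioc_consecutive P (Nat.zero_le j) hji.le, add_sub_cancel_left, sqDev]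
  have hwk_eq : ∀ j i, j < i → i ≤ n →
      wk j i = truncCost n c' ((1 + ε) * c') M (w' j i / c') (i - j) := by
    intro j i hji hin
    rw [hwk j i hji hin, truncCost, Nat.cast_sub hji.le, show n - i + j = n - (i - j) by omega]
  have hv_nonneg : ∀ j i, j < i → i ≤ n → 0 ≤ w' j i / c' := fun j i hji hin =>
    div_nonneg (hw'_eq j i hji hin ▸ sqDev_nonneg P hji.le) hc.le
  rw [hwk_eq i₁ i₃ (by omega) (by omega), hwk_eq i₂ i₄ (by omega) h4n,
    hwk_eq i₁ i₄ (by omega) h4n, hwk_eq i₂ i₃ h23 (by omega)]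
  refine truncCost_cross_add_le (by omega) (by omega) (by omega) (by omega) (by omega) hMpos.le
    (hM _ _ (by omega) (by omega)) (hM _ _ (by omega) h4n) (hv_nonneg _ _ h23 (by omega))
    (hv_nonneg _ _ (by omega) h4n) ?_
  rw [← add_div, ← add_div, hw'_eq i₁ i₃ (by omega) (by omega),
    hw'_eq i₂ i₄ (by omega) h4n, hw'_eq i₁ i₄ (by omega) h4n, hw'_eq i₂ i₃ h23 (by omega)]
  exact div_le_div_of_nonneg_right (sqDev_add_sqDev_le P h12.le h23.le h34.le) hc.le

/-- The truncated function `w_k` (equal to `w'(j,i)/c'` when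
`c' ≤ i − j ≤ (1+ε)·c'` with `c' = (1+ε)^(k−1)`, and to exponentially large multiples of a
sufficiently large constant `M` outside that band) is Monge: for `0 ≤ i₁ < i₂ < i₃ < i₄ ≤ n`,
`w_k(i₁,i₄) + w_k(i₂,i₃) ≥ w_k(i₁,i₃) + w_k(i₂,i₄)`. -/
theorem stmt9 (n : ℕ) (hn : 1 ≤ n) (P : ℕ → ℝ)
    (S : ℕ → ℝ) (hS : ∀ i, S i = ∑ m ∈ Finset.Icc 1 i, P m)
    (w' : ℕ → ℕ → ℝ)
    (hw' : ∀ j i : ℕ, j < i → i ≤ n →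
      w' j i = ((i : ℝ) - j) * ∑ m ∈ Finset.Icc (j + 1) i, (P m) ^ 2 - (S i - S j) ^ 2)
    (ε : ℝ) (hε : 0 < ε) (k : ℕ) (hk : 1 ≤ k)
    (c' : ℝ) (hc' : c' = (1 + ε) ^ (k - 1))
    (M : ℝ) (hMpos : 0 < M) (hM : ∀ j i : ℕ, j < i → i ≤ n → w' j i / c' ≤ M)
    (wk : ℕ → ℕ → ℝ)
    (hwk : ∀ j i : ℕ, j < i → i ≤ n →
      wk j i = if ((i : ℝ) - j) < c' then 2 ^ (n - i + j) * M
        else if (1 + ε) * c' < ((i : ℝ) - j) then 2 ^ (i - j) * M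
        else w' j i / c')
    (i₁ i₂ i₃ i₄ : ℕ) (h12 : i₁ < i₂) (h23 : i₂ < i₃) (h34 : i₃ < i₄) (h4n : i₄ ≤ n) :
    wk i₁ i₃ + wk i₂ i₄ ≤ wk i₁ i₄ + wk i₂ i₃ :=
  stmt9_general n P S hS w' hw' ε hε k c' hc' M hMpos hM wk hwk i₁ i₂ i₃ i₄ h12 h23 h34 h4n
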